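/- arXiv:2205.11105 — 7 statements merged into one kernel-verified Lean document; each statement's English description precedes it below -/
import Mathlib

section
/- Let F : C ⥤ D be a fully faithful triangulated functor between pretriangulated categories which admits a right adjoint (or a left adjoint) compatible with the shift functors. Then the essential image of F is a thick triangulated subcategory of D, i.e. it is closed under shifts in both directions, under cones of morphisms between its objects, and under direct summands. -/
open CategoryTheory Limits Pretriangulated

/-! Closure under shifts and cones holds for any full triangulated functor: a triangle on objects
of the essential image is isomorphic to the image of a triangle of `C`. For summands, the counit
`ε` of an adjunction `F ⊣ G` with `F` fully faithful is invertible exactly on the essential image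
of `F`; if `Y` is a retract of `Z`, then `ε_Y` is a retract of `ε_Z`, and retracts of isomorphisms
are isomorphisms. Dually for the unit of `G ⊣ F`. -/

/-- A class of objects of a pretriangulated category is *thick* if it is closed under
isomorphisms, shifts in both directions, cones of morphisms between its objects
(i.e. for any distinguished triangle with first two objects in the class, the third is too),
and direct summands. -/
def IsThickClass {C : Type*} [Category C] [Preadditive C] [HasZeroObject C] [HasShift C ℤ]
    [∀ n : ℤ, (shiftFunctor C n).Additive] [Pretriangulated C] (S : Set C) : Prop :=
  (∀ (Z Z' : C), (Z ≅ Z') → Z ∈ S → Z' ∈ S) ∧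
  (∀ Z ∈ S, ∀ n : ℤ, Z⟦n⟧ ∈ S) ∧
  (∀ T : Triangle C, T ∈ (distTriang C) → T.obj₁ ∈ S → T.obj₂ ∈ S → T.obj₃ ∈ S) ∧
  (∀ (Z Y : C), Z ∈ S → ∀ (i : Y ⟶ Z) (p : Z ⟶ Y), i ≫ p = 𝟙 Y → Y ∈ S)

namespace CategoryTheory.Functor

variable {C D : Type*} [Category C] [Category D] (F : C ⥤ D) [F.Full] [F.Faithful]

lemma isStableUnderRetracts_essImage_of_isLeftAdjoint [F.IsLeftAdjoint] :
    F.essImage.IsStableUnderRetracts where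
  of_retract h hZ :=
    let adj := Adjunction.ofIsLeftAdjoint F
    adj.isIso_counit_app_iff_mem_essImage.mp <|
      MorphismProperty.of_retract (P := .isomorphisms D) (adj.counit.retractArrowApp h)
        (adj.isIso_counit_app_iff_mem_essImage.mpr hZ)

lemma isStableUnderRetracts_essImage_of_isRightAdjoint [F.IsRightAdjoint] :
    F.essImage.IsStableUnderRetracts where
  of_retract h hZ :=
    let adj := Adjunction.ofIsRightAdjoint F
    adj.isIso_unit_app_iff_mem_essImage.mp <|
      MorphismProperty.of_retract (P := .isomorphisms D) (adj.unit.retractArrowApp h)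
        (adj.isIso_unit_app_iff_mem_essImage.mpr hZ)

end CategoryTheory.Functor

/-- Let `F : C ⥤ D` be a fully faithful triangulated functor between
pretriangulated categories which admits a right adjoint (or a left adjoint) compatible with
the shift functors. Then the essential image of `F` is a thick triangulated subcategory
of `D`. -/
theorem stmt_2 {C : Type*} [Category C] {D : Type*} [Category D]
    [Preadditive C] [HasZeroObject C] [HasShift C ℤ]
    [∀ n : ℤ, (shiftFunctor C n).Additive] [Pretriangulated C]
    [Preadditive D] [HasZeroObject D] [HasShift D ℤ]
    [∀ n : ℤ, (shiftFunctor D n).Additive] [Pretriangulated D]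
    (F : C ⥤ D) [F.Full] [F.Faithful] [F.CommShift ℤ] [F.IsTriangulated]
    (hadj :
      (∃ (G : D ⥤ C) (cG : G.CommShift ℤ) (adj : F ⊣ G),
        letI := cG
        NatTrans.CommShift adj.unit ℤ ∧ NatTrans.CommShift adj.counit ℤ) ∨
      (∃ (G : D ⥤ C) (cG : G.CommShift ℤ) (adj : G ⊣ F),
        letI := cG
        NatTrans.CommShift adj.unit ℤ ∧ NatTrans.CommShift adj.counit ℤ)) :
    IsThickClass F.essImage := by
  have : F.essImage.IsStableUnderRetracts := by
    rcases hadj with ⟨G, _, adj, _⟩ | ⟨G, _, adj, _⟩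
    · have := adj.isLeftAdjoint
      exact F.isStableUnderRetracts_essImage_of_isLeftAdjoint
    · have := adj.isRightAdjoint
      exact F.isStableUnderRetracts_essImage_of_isRightAdjoint
  refine ⟨fun _ _ e hZ => F.essImage.prop_of_iso e hZ,
    fun Z hZ n => F.essImage.le_shift n Z hZ,
    fun T hT h₁ h₂ => F.essImage.ext_of_isTriangulatedClosed₃ T hT h₁ h₂,
    fun _ _ hZ i p hip => F.essImage.prop_of_retract ⟨i, p, hip⟩ hZ⟩
end

section
/- Let D be a pretriangulated category equipped with a t-structure (U, V) and let H = U ∩ V[1] be its heart, regarded as a full subcategory of D. Then a morphism f : X → Y between objects of H is a monomorphism in the category H if and only if the cone of f in D belongs to H. -/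
/-!
The cone `Z` of `f : X ⟶ Y` always lies in `U`, as an extension of `Y` and `X⟦1⟧`, so `Z` is in
the heart iff every map `A ⟶ Z⟦-1⟧` with `A ∈ U` vanishes. Through the triangle
`Z⟦-1⟧ ⟶ X ⟶ Y`, this says that no nonzero map from an object of `U` to `X` is killed by `f`.
Monomorphy in the heart only tests sources in the heart; a map `A ⟶ X` with `A ∈ U` factors
through `A ⟶ H⁰(A)` because `X` receives no nonzero maps from `U⟦1⟧`, and `H⁰(A)` is in the heart.
-/

open CategoryTheory Limits Pretriangulated

theorem hom_eq_zero_of_mem_orthogonal {D : Type*} [Category D] [HasZeroMorphisms D]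
    {U V : Set D} (hV : V = {X : D | ∀ A ∈ U, ∀ f : A ⟶ X, f = 0})
    {A B : D} (hA : A ∈ U) (hB : B ∈ V) (φ : A ⟶ B) : φ = 0 := by
  subst hV
  exact hB A hA φ

theorem mem_orthogonal_of_iso {D : Type*} [Category D] [HasZeroMorphisms D]
    {U V : Set D} (hV : V = {X : D | ∀ A ∈ U, ∀ f : A ⟶ X, f = 0})
    {B B' : D} (e : B ≅ B') (hB : B ∈ V) : B' ∈ V := by
  subst hV
  intro A hA φ
  rw [← cancel_mono e.inv, zero_comp]
  exact hB A hA _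

theorem shift_hom_eq_zero_of_mem_orthogonal {D : Type*} [Category D] [Preadditive D]
    [HasShift D ℤ] [∀ n : ℤ, (shiftFunctor D n).Additive]
    {U V : Set D} (hV : V = {X : D | ∀ A ∈ U, ∀ f : A ⟶ X, f = 0})
    {A W : D} (hA : A ∈ U) (hW : W⟦(-1 : ℤ)⟧ ∈ V) (φ : A⟦(1 : ℤ)⟧ ⟶ W) : φ = 0 := by
  apply (shiftFunctor D (-1 : ℤ)).map_injective
  rw [Functor.map_zero, ← cancel_epi (shiftShiftNeg A (1 : ℤ)).inv, comp_zero]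
  exact hom_eq_zero_of_mem_orthogonal hV hA hW _

def CancelsZeroOn {D : Type*} [Category D] [HasZeroMorphisms D] (P : Set D) {X Y : D}
    (f : X ⟶ Y) : Prop :=
  ∀ ⦃W : D⦄, W ∈ P → ∀ a : W ⟶ X, a ≫ f = 0 → a = 0

theorem CancelsZeroOn.mono {D : Type*} [Category D] [HasZeroMorphisms D] {P Q : Set D}
    {X Y : D} {f : X ⟶ Y} (hf : CancelsZeroOn Q f) (hPQ : P ⊆ Q) : CancelsZeroOn P f :=
  fun _ hW => hf (hPQ hW)

theorem ObjectProperty.mono_iff_cancelsZeroOn {D : Type*} [Category D] [Preadditive D]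
    {P : ObjectProperty D} {X Y : P.FullSubcategory} (f : X ⟶ Y) :
    Mono f ↔ CancelsZeroOn P f.hom := by
  constructor
  · intro hf W hW a ha
    have : ObjectProperty.homMk (P := P) (X := ⟨W, hW⟩) a = 0 :=
      zero_of_comp_mono f (InducedCategory.hom_ext ha)
    exact congrArg InducedCategory.Hom.hom this
  · intro hf
    refine ⟨fun {W} g₁ g₂ hg => InducedCategory.hom_ext (sub_eq_zero.1 ?_)⟩
    refine hf W.property _ ?_
    rw [Preadditive.sub_comp, sub_eq_zero]
    exact congrArg InducedCategory.Hom.hom hg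

section Pretriangulated

variable {D : Type*} [Category D] [Preadditive D] [HasZeroObject D] [HasShift D ℤ]
    [∀ n : ℤ, (shiftFunctor D n).Additive] [Pretriangulated D]

theorem cancelsZeroOn_mor₂_of_obj₁_mem {U V : Set D}
    (hV : V = {X : D | ∀ A ∈ U, ∀ f : A ⟶ X, f = 0}) (T : Triangle D)
    (hT : T ∈ distTriang D) (h₁ : T.obj₁ ∈ V) : CancelsZeroOn U T.mor₂ := by
  intro A hA b hb
  obtain ⟨c, rfl⟩ := Triangle.coyoneda_exact₂ T hT b hb
  rw [hom_eq_zero_of_mem_orthogonal hV hA h₁ c, zero_comp]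

theorem obj₁_mem_of_cancelsZeroOn_mor₂ {U V : Set D}
    (hV : V = {X : D | ∀ A ∈ U, ∀ f : A ⟶ X, f = 0}) (T : Triangle D) (hT : T ∈ distTriang D)
    (h₃ : T.obj₃⟦(-1 : ℤ)⟧ ∈ V) (hf : CancelsZeroOn U T.mor₂) : T.obj₁ ∈ V := by
  rw [hV]
  intro A hA b
  have hb : b ≫ T.mor₁ = 0 :=
    hf hA _ (by rw [Category.assoc, comp_distTriang_mor_zero₁₂ _ hT, comp_zero])
  exact cancelsZeroOn_mor₂_of_obj₁_mem hV _ (inv_rot_of_distTriang _ hT) h₃ hA b hb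

structure IsTStructure (U V : Set D) : Prop where
  mem_of_iso : ∀ (Z Z' : D), (Z ≅ Z') → Z ∈ U → Z' ∈ U
  eq_orthogonal : V = {X : D | ∀ A ∈ U, ∀ f : A ⟶ X, f = 0}
  shift_mem : ∀ X ∈ U, X⟦(1 : ℤ)⟧ ∈ U
  exists_distTriang : ∀ X : D, ∃ (A B : D) (f : A ⟶ X) (g : X ⟶ B) (h : B ⟶ A⟦(1 : ℤ)⟧),
    A ∈ U ∧ B ∈ V ∧ Triangle.mk f g h ∈ distTriang D

namespace IsTStructure

def heart (U V : Set D) : Set D := {X : D | X ∈ U ∧ X⟦(-1 : ℤ)⟧ ∈ V}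

variable {U V : Set D}

theorem obj₂_mem_of_distTriang (ht : IsTStructure U V) (T : Triangle D)
    (hT : T ∈ distTriang D) (h₁ : T.obj₁ ∈ U) (h₃ : T.obj₃ ∈ U) : T.obj₂ ∈ U := by
  obtain ⟨A, B, i, q, δ, hA, hB, hT'⟩ := ht.exists_distTriang T.obj₂
  have hq : q = 0 := by
    obtain ⟨c, rfl⟩ := Triangle.yoneda_exact₂ T hT q
      (hom_eq_zero_of_mem_orthogonal ht.eq_orthogonal h₁ hB _)
    rw [hom_eq_zero_of_mem_orthogonal ht.eq_orthogonal h₃ hB c, comp_zero]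
  have hB0 : IsZero B := by
    have hq' : q ≫ 𝟙 B = 0 := by rw [hq, zero_comp]
    obtain ⟨r, hr⟩ : ∃ r, 𝟙 B = δ ≫ r := Triangle.yoneda_exact₃ _ hT' _ hq'
    rw [IsZero.iff_id_eq_zero, hr,
      hom_eq_zero_of_mem_orthogonal ht.eq_orthogonal (ht.shift_mem A hA) hB r, comp_zero]
  have : IsIso i := (Triangle.isZero₃_iff_isIso₁ _ hT').1 hB0
  exact ht.mem_of_iso A T.obj₂ (asIso i) hA

/-- The shift of the truncation triangle of `A⟦-1⟧`: up to `A⟦-1⟧⟦1⟧ ≅ A`, it is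
`τ≤₋₁ A ⟶ A ⟶ H⁰(A)`. -/
theorem exists_distTriang_mem_heart (ht : IsTStructure U V) {A : D} (hA : A ∈ U) :
    ∃ (A₁ H : D) (i : A₁⟦(1 : ℤ)⟧ ⟶ A⟦(-1 : ℤ)⟧⟦(1 : ℤ)⟧) (p : A⟦(-1 : ℤ)⟧⟦(1 : ℤ)⟧ ⟶ H)
      (δ : H ⟶ A₁⟦(1 : ℤ)⟧⟦(1 : ℤ)⟧),
      A₁ ∈ U ∧ H ∈ heart U V ∧ Triangle.mk i p δ ∈ distTriang D := by
  obtain ⟨A₁, B, i, q, δ, hA₁, hB, hT⟩ := ht.exists_distTriang (A⟦(-1 : ℤ)⟧)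
  let T := (Triangle.shiftFunctor D (1 : ℤ)).obj (Triangle.mk i q δ)
  have hT₁ : T ∈ distTriang D := Triangle.shift_distinguished _ hT 1
  have hBU : B⟦(1 : ℤ)⟧ ∈ U :=
    ht.obj₂_mem_of_distTriang T.rotate (rot_of_distTriang _ hT₁)
      (ht.mem_of_iso A _ (shiftNegShift A (1 : ℤ)).symm hA)
      (ht.shift_mem _ (ht.shift_mem _ hA₁))
  have hBV : B⟦(1 : ℤ)⟧⟦(-1 : ℤ)⟧ ∈ V :=
    mem_orthogonal_of_iso ht.eq_orthogonal (shiftShiftNeg B (1 : ℤ)).symm hB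
  exact ⟨A₁, B⟦(1 : ℤ)⟧, T.mor₁, T.mor₂, T.mor₃, hA₁, ⟨hBU, hBV⟩, hT₁⟩

theorem cancelsZeroOn_of_cancelsZeroOn_heart (ht : IsTStructure U V) {X Y : D}
    (hX : X⟦(-1 : ℤ)⟧ ∈ V) (hY : Y⟦(-1 : ℤ)⟧ ∈ V) {f : X ⟶ Y} (hf : CancelsZeroOn (heart U V) f) :
    CancelsZeroOn U f := by
  intro A hA a ha
  obtain ⟨A₁, H, i, p, δ, hA₁, hH, hT⟩ := ht.exists_distTriang_mem_heart hA
  let e := shiftNegShift A (1 : ℤ)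
  obtain ⟨a', ha'⟩ : ∃ a' : H ⟶ X, e.hom ≫ a = p ≫ a' := Triangle.yoneda_exact₂ _ hT _
    (shift_hom_eq_zero_of_mem_orthogonal ht.eq_orthogonal hA₁ hX _)
  have ha'f : a' ≫ f = 0 := by
    have hpa'f : p ≫ a' ≫ f = 0 := by
      rw [← Category.assoc, ← ha', Category.assoc, ha, comp_zero]
    obtain ⟨c, hc⟩ : ∃ c, a' ≫ f = δ ≫ c := Triangle.yoneda_exact₃ _ hT _ hpa'f
    rw [hc, shift_hom_eq_zero_of_mem_orthogonal ht.eq_orthogonal (ht.shift_mem _ hA₁) hY c,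
      comp_zero]
  rw [← cancel_epi e.hom, ha', hf hH a' ha'f, comp_zero, comp_zero]

theorem obj₃_mem_heart_of_cancelsZeroOn (ht : IsTStructure U V) (T : Triangle D)
    (hT : T ∈ distTriang D) (h₁ : T.obj₁ ∈ U) (h₂ : T.obj₂ ∈ heart U V)
    (hf : CancelsZeroOn U T.mor₁) : T.obj₃ ∈ heart U V :=
  ⟨ht.obj₂_mem_of_distTriang T.rotate (rot_of_distTriang _ hT) h₂.1 (ht.shift_mem _ h₁),
    obj₁_mem_of_cancelsZeroOn_mor₂ ht.eq_orthogonal _ (inv_rot_of_distTriang _ hT) h₂.2 hf⟩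

end IsTStructure

end Pretriangulated

/-- Let `D` be a pretriangulated category with a t-structure `(U, V)` and
let `H = U ∩ V[1]` be its heart. A morphism `f : X ⟶ Y` between objects of `H` is a
monomorphism in `H` if and only if the cone of `f` in `D` belongs to `H`. -/
theorem stmt_3 {D : Type*} [Category D]
    [Preadditive D] [HasZeroObject D] [HasShift D ℤ]
    [∀ n : ℤ, (shiftFunctor D n).Additive] [Pretriangulated D]
    -- the t-structure `(U, V)`:
    (U V : Set D)
    (hUiso : ∀ (Z Z' : D), (Z ≅ Z') → Z ∈ U → Z' ∈ U)
    (hV : V = {X : D | ∀ A ∈ U, ∀ f : A ⟶ X, f = 0})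
    (hU : ∀ X ∈ U, X⟦(1 : ℤ)⟧ ∈ U)
    (htri : ∀ X : D, ∃ (A B : D) (f : A ⟶ X) (g : X ⟶ B) (h : B ⟶ A⟦(1 : ℤ)⟧),
      A ∈ U ∧ B ∈ V ∧ Triangle.mk f g h ∈ (distTriang D))
    -- the heart `H = U ∩ V[1]`:
    (heart : Set D) (hheart : heart = {X : D | X ∈ U ∧ X⟦(-1 : ℤ)⟧ ∈ V})
    -- a morphism `f` of the heart and a cone `Z` of `f` in `D`:
    (X Y : ObjectProperty.FullSubcategory (· ∈ heart)) (f : X ⟶ Y) (Z : D)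
    (g : Y.obj ⟶ Z) (h : Z ⟶ X.obj⟦(1 : ℤ)⟧)
    (hT : Triangle.mk ((ObjectProperty.ι (· ∈ heart)).map f) g h ∈ (distTriang D)) :
    Mono f ↔ Z ∈ heart := by
  subst hheart
  have ht : IsTStructure U V := ⟨hUiso, hV, hU, htri⟩
  rw [ObjectProperty.mono_iff_cancelsZeroOn]
  constructor
  · intro hf
    exact ht.obj₃_mem_heart_of_cancelsZeroOn _ hT X.2.1 Y.2
      (ht.cancelsZeroOn_of_cancelsZeroOn_heart X.2.2 Y.2.2 hf)
  · intro hZ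
    exact (cancelsZeroOn_mor₂_of_obj₁_mem hV _ (inv_rot_of_distTriang _ hT) hZ.2).mono
      fun _ hW => hW.1
end

section
/- Let D be a pretriangulated category with a fixed t-structure t, with aisles D^{≤n} (so D^{≤n} = D^{≤0}[-n]) and coaisles D^{≥n}. Let (U, V) be another t-structure on D which is intermediate with respect to t, i.e. D^{≤n} ⊆ U ⊆ D^{≤m} for some integers n ≤ m. Let D^b denote the full subcategory of t-bounded objects, i.e. those X lying in D^{≤a} ∩ D^{≥-a} for some integer a ≥ 0; D^b is a triangulated subcategory of D. Then the pair (U ∩ D^b, V ∩ D^b) is a t-structure on D^b. -/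
/-!
Since `D^{≤n} ⊆ U ⊆ D^{≤m}`, objects of `U` are bounded above and objects of `V = U^{⊥0}` are
bounded below (`V ⊆ D^{≥n+1}`). In the approximating triangle `A → X → B → A⟦1⟧` of a bounded `X`,
the triangulated subcategories `D^-` and `D^+` then force `A` and `B` to be bounded. If a bounded
`X` is orthogonal to `U ∩ D^b`, the first map of this triangle vanishes, so `X → B` is a
monomorphism into an object of `V`, and hence `X ∈ V`.
-/

open CategoryTheory Limits Pretriangulated Triangulated

def tBounded {D : Type*} [Category D] [Preadditive D] [HasZeroObject D] [HasShift D ℤ]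
    [∀ n : ℤ, (shiftFunctor D n).Additive] [Pretriangulated D]
    (t : TStructure D) : Set D :=
  {X : D | ∃ a : ℤ, 0 ≤ a ∧ t.le a X ∧ t.ge (-a) X}

namespace CategoryTheory.Triangulated.TStructure

variable {D : Type*} [Category D] [Preadditive D] [HasZeroObject D] [HasShift D ℤ]
  [∀ n : ℤ, (shiftFunctor D n).Additive] [Pretriangulated D] (t : TStructure D)

lemma mem_tBounded_iff (X : D) : X ∈ tBounded t ↔ t.bounded X := by
  constructor
  · rintro ⟨a, -, hle, hge⟩
    exact ⟨⟨-a, ⟨hge⟩⟩, ⟨a, ⟨hle⟩⟩⟩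
  · rintro ⟨⟨p, hp⟩, ⟨q, hq⟩⟩
    exact ⟨max (max q (-p)) 0, le_max_right _ _,
      t.le_monotone (by omega) _ hq.le, t.ge_antitone (by omega) _ hp.ge⟩

lemma bounded_obj₁_and_bounded_obj₃_of_distTriang {T : Triangle D} (hT : T ∈ distTriang D)
    (h₁ : t.minus T.obj₁) (h₂ : t.bounded T.obj₂) (h₃ : t.plus T.obj₃) :
    t.bounded T.obj₁ ∧ t.bounded T.obj₃ :=
  ⟨⟨t.plus.ext_of_isTriangulatedClosed₂ _ (inv_rot_of_distTriang _ hT)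
      (t.plus.le_shift (-1) _ h₃) h₂.1, h₁⟩,
    ⟨h₃, t.minus.ext_of_isTriangulatedClosed₂ _ (rot_of_distTriang _ hT) h₂.2
      (t.minus.le_shift 1 _ h₁)⟩⟩

lemma isGE_of_forall_eq_zero {U : Set D} {n : ℤ} (hU : ∀ X, t.le n X → X ∈ U) {B : D}
    (hB : ∀ A ∈ U, ∀ f : A ⟶ B, f = 0) : t.IsGE B (n + 1) :=
  (t.isGE_iff_orthogonal n (n + 1) rfl B).2 fun A f hA ↦ hB A (hU A hA.le) f

end CategoryTheory.Triangulated.TStructure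

/-- Let `D` be a pretriangulated category with a fixed t-structure `t`, and
let `(U, V)` be another t-structure on `D` which is intermediate with respect to `t`, i.e.
`D^{≤n} ⊆ U ⊆ D^{≤m}` for some integers `n ≤ m`. Then `(U ∩ D^b, V ∩ D^b)` is a t-structure
on the subcategory `D^b` of `t`-bounded objects: the coaisle is the right Hom-orthogonal of
the aisle inside `D^b`, the aisle is closed under suspension, and every object of `D^b`
admits an approximating distinguished triangle with outer terms in the two classes. -/
theorem stmt_4 {D : Type*} [Category D]
    [Preadditive D] [HasZeroObject D] [HasShift D ℤ]
    [∀ n : ℤ, (shiftFunctor D n).Additive] [Pretriangulated D]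
    (t : TStructure D)
    -- the second t-structure `(U, V)`:
    (U V : Set D)
    (hUiso : ∀ (Z Z' : D), (Z ≅ Z') → Z ∈ U → Z' ∈ U)
    (hV : V = {X : D | ∀ A ∈ U, ∀ f : A ⟶ X, f = 0})
    (hU : ∀ X ∈ U, X⟦(1 : ℤ)⟧ ∈ U)
    (htri : ∀ X : D, ∃ (A B : D) (f : A ⟶ X) (g : X ⟶ B) (h : B ⟶ A⟦(1 : ℤ)⟧),
      A ∈ U ∧ B ∈ V ∧ Triangle.mk f g h ∈ (distTriang D))
    -- `(U, V)` is intermediate with respect to `t`: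
    (n m : ℤ) (hnm : n ≤ m)
    (h₁ : ∀ X : D, t.le n X → X ∈ U) (h₂ : ∀ X ∈ U, t.le m X) :
    (∀ X ∈ tBounded t, (X ∈ V ↔ ∀ A ∈ U ∩ tBounded t, ∀ f : A ⟶ X, f = 0)) ∧
    (∀ X ∈ U ∩ tBounded t, X⟦(1 : ℤ)⟧ ∈ U ∩ tBounded t) ∧
    (∀ X ∈ tBounded t, ∃ (A B : D) (f : A ⟶ X) (g : X ⟶ B) (h : B ⟶ A⟦(1 : ℤ)⟧),
      A ∈ U ∩ tBounded t ∧ B ∈ V ∩ tBounded t ∧ Triangle.mk f g h ∈ (distTriang D)) := by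
  have hVU : ∀ B ∈ V, ∀ A ∈ U, ∀ f : A ⟶ B, f = 0 := by
    rw [hV]
    exact fun B hB ↦ hB
  have approx : ∀ X ∈ tBounded t, ∃ (A B : D) (f : A ⟶ X) (g : X ⟶ B) (h : B ⟶ A⟦(1 : ℤ)⟧),
      A ∈ U ∩ tBounded t ∧ B ∈ V ∩ tBounded t ∧ Triangle.mk f g h ∈ (distTriang D) := by
    intro X hX
    obtain ⟨A, B, f, g, h, hA, hB, hT⟩ := htri X
    obtain ⟨hA_bdd, hB_bdd⟩ := t.bounded_obj₁_and_bounded_obj₃_of_distTriang hT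
      ⟨m, ⟨h₂ A hA⟩⟩ ((t.mem_tBounded_iff X).1 hX) ⟨n + 1, t.isGE_of_forall_eq_zero h₁ (hVU B hB)⟩
    exact ⟨A, B, f, g, h, ⟨hA, (t.mem_tBounded_iff A).2 hA_bdd⟩,
      ⟨hB, (t.mem_tBounded_iff B).2 hB_bdd⟩, hT⟩
  refine ⟨fun X hX ↦ ⟨fun hXV A hA f ↦ hVU X hXV A hA.1 f, fun hX_orth ↦ ?_⟩,
    fun X ⟨hXU, hX⟩ ↦ ⟨hU X hXU, (t.mem_tBounded_iff _).2
      (t.bounded.le_shift 1 X ((t.mem_tBounded_iff X).1 hX))⟩, approx⟩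
  obtain ⟨A, B, f, g, h, hA, hB, hT⟩ := approx X hX
  have : Mono g := Triangle.mono₂ _ hT (hX_orth A hA f)
  rw [hV]
  intro A' hA' φ
  rw [← cancel_mono g, zero_comp]
  exact hVU B hB.1 A' hA' (φ ≫ g)
end

section
/- In the ring R = k[x₁, x₂, …, y]/(x_i x_j, y^i x_i : i, j ≥ 1), the y-power torsion submodule t(R) equals the ideal of R generated by the elements x_n, n ≥ 1, and t(R) is the internal direct sum of the cyclic R-submodules R·x_n for n ≥ 1; in particular t(R) ≅ ⊕_{n ≥ 1} R·x_n as R-modules. -/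
open MvPolynomial

set_option maxHeartbeats 1000000
set_option synthInstance.maxHeartbeats 400000

noncomputable section

/-- The polynomial ring `k[x₁, x₂, …, y]`, with `y` the variable `none` and `xₙ` (`n ≥ 1`)
the variable `some n`. -/
abbrev PolyR (k : Type) [Field k] : Type := MvPolynomial (Option ℕ+) k

/-- The variable `y`. -/
def yP (k : Type) [Field k] : PolyR k := X none

/-- The variable `xₙ`, for `n ≥ 1`. -/
def xP (k : Type) [Field k] (n : ℕ+) : PolyR k := X (some n)

/-- The set of relations `xᵢxⱼ` (`i, j ≥ 1`) and `yⁱxᵢ` (`i ≥ 1`). -/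
def relSet (k : Type) [Field k] : Set (PolyR k) :=
  {p | (∃ i j : ℕ+, p = xP k i * xP k j) ∨ (∃ i : ℕ+, p = yP k ^ (i : ℕ) * xP k i)}

/-- The ring `R = k[x₁, x₂, …, y]/(xᵢxⱼ, yⁱxᵢ : i, j ≥ 1)`. -/
abbrev Rg (k : Type) [Field k] : Type := PolyR k ⧸ Ideal.span (relSet k)

/-- The image of `y` in `R`. -/
def yR (k : Type) [Field k] : Rg k := Ideal.Quotient.mk _ (yP k)

/-- The image of `xₙ` in `R`. -/
def xR (k : Type) [Field k] (n : ℕ+) : Rg k := Ideal.Quotient.mk _ (xP k n)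

/-- The `y`-power torsion submodule `t(R) = {r ∈ R : yᵏ r = 0 for some k ≥ 0}`. -/
def tR (k : Type) [Field k] : Submodule (Rg k) (Rg k) :=
  Submodule.torsion' (Rg k) (Rg k) (Submonoid.powers (yR k))

end

noncomputable section Aux
variable (k : Type) [Field k]

def phiP : PolyR k →ₐ[k] Polynomial k :=
  aeval (fun o => match o with | none => Polynomial.X | some _ => 0)

@[simp] lemma phiP_yP : phiP k (yP k) = Polynomial.X := by simp [phiP, yP]
@[simp] lemma phiP_xP (n : ℕ+) : phiP k (xP k n) = 0 := by simp [phiP, xP]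

lemma phiP_vanish : ∀ a ∈ Ideal.span (relSet k), phiP k a = 0 := by
  have h : Ideal.span (relSet k) ≤ RingHom.ker (phiP k).toRingHom := by
    rw [Ideal.span_le]
    rintro p (⟨i, j, rfl⟩ | ⟨i, rfl⟩) <;>
      simp [SetLike.mem_coe, RingHom.mem_ker]
  exact fun a ha => h ha

def PhiR : Rg k →ₐ[k] Polynomial k := Ideal.Quotient.liftₐ _ (phiP k) (phiP_vanish k)

@[simp] lemma PhiR_mk (p : PolyR k) :
    PhiR k (Ideal.Quotient.mk (Ideal.span (relSet k)) p) = phiP k p := rfl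

@[simp] lemma PhiR_yR : PhiR k (yR k) = Polynomial.X := by simp [yR]

def iotaP : Polynomial k →ₐ[k] PolyR k := Polynomial.aeval (X none)
def iotaR : Polynomial k →ₐ[k] Rg k := Polynomial.aeval (yR k)

lemma xR_mul_xR (i j : ℕ+) : xR k i * xR k j = 0 := by
  rw [xR, xR, ← map_mul, Ideal.Quotient.eq_zero_iff_mem]
  exact Ideal.subset_span (Or.inl ⟨i, j, rfl⟩)

lemma yR_pow_mul_xR (i : ℕ+) : yR k ^ (i : ℕ) * xR k i = 0 := by
  rw [yR, xR, ← map_pow, ← map_mul, Ideal.Quotient.eq_zero_iff_mem]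
  exact Ideal.subset_span (Or.inr ⟨i, rfl⟩)

lemma sub_mem_J (p : PolyR k) :
    p - iotaP k (phiP k p) ∈
      Ideal.span (Set.range (fun n : ℕ+ => (X (some n) : PolyR k))) := by
  induction p using MvPolynomial.induction_on with
  | C a => simp [phiP, iotaP]
  | add p q hp hq =>
      rw [map_add, map_add, add_sub_add_comm]
      exact add_mem hp hq
  | mul_X p i hp =>
      cases i with
      | none =>
          have h : p * X none - iotaP k (phiP k (p * X none)) =
              (p - iotaP k (phiP k p)) * X none := by
            rw [map_mul]
            have h1 : phiP k (X none : PolyR k) = Polynomial.X := by simp [phiP]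
            rw [h1, map_mul]
            have h2 : iotaP k Polynomial.X = X none := by simp [iotaP]
            rw [h2]; ring
          rw [h]
          exact Ideal.mul_mem_right _ _ hp
      | some n =>
          have h1 : phiP k (X (some n) : PolyR k) = 0 := by simp [phiP]
          rw [map_mul, h1, mul_zero, map_zero, sub_zero]
          exact Ideal.mul_mem_left _ _ (Ideal.subset_span ⟨n, rfl⟩)

lemma mk_iotaP (p : Polynomial k) :
    Ideal.Quotient.mk (Ideal.span (relSet k)) (iotaP k p) = iotaR k p := by
  have h : (Ideal.Quotient.mkₐ k (Ideal.span (relSet k))).comp (iotaP k) = iotaR k := by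
    apply Polynomial.algHom_ext
    simp [iotaP, iotaR, yR, yP]
  exact DFunLike.congr_fun h p

lemma sub_mem_spanx (r : Rg k) :
    r - iotaR k (PhiR k r) ∈ Ideal.span (Set.range (xR k)) := by
  obtain ⟨p, rfl⟩ := Ideal.Quotient.mk_surjective r
  have hle : Ideal.span (Set.range (fun n : ℕ+ => (X (some n) : PolyR k))) ≤
      Ideal.comap (Ideal.Quotient.mk (Ideal.span (relSet k)))
        (Ideal.span (Set.range (xR k))) := by
    rw [Ideal.span_le]
    rintro _ ⟨n, rfl⟩
    exact Ideal.subset_span ⟨n, rfl⟩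
  have h := hle (sub_mem_J k p)
  rw [Ideal.mem_comap, map_sub, mk_iotaP] at h
  simpa using h

lemma mul_xR_eq_zero {s : Rg k} (hs : s ∈ Ideal.span (Set.range (xR k))) (n : ℕ+) :
    s * xR k n = 0 := by
  induction hs using Submodule.span_induction with
  | mem x hx => obtain ⟨m, rfl⟩ := hx; exact xR_mul_xR k m n
  | zero => exact zero_mul _
  | add x y _ _ hx hy => rw [add_mul, hx, hy, add_zero]
  | smul r x _ hx => rw [smul_eq_mul, mul_assoc, hx, mul_zero]

abbrev Qn (n : ℕ+) : Type :=
  Polynomial k ⧸ Ideal.span {(Polynomial.X : Polynomial k) ^ (2 * (n : ℕ))}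

lemma mkX_sq (n : ℕ+) :
    (Ideal.Quotient.mk (Ideal.span {(Polynomial.X : Polynomial k) ^ (2 * (n : ℕ))})
        Polynomial.X) ^ (n : ℕ) *
      (Ideal.Quotient.mk _ Polynomial.X) ^ (n : ℕ) = 0 := by
  rw [← pow_add, ← two_mul, ← map_pow, Ideal.Quotient.eq_zero_iff_mem]
  exact Ideal.mem_span_singleton_self _

def gP (n : ℕ+) : PolyR k →ₐ[k] Qn k n :=
  aeval (fun o => match o with
    | none => Ideal.Quotient.mk _ Polynomial.X
    | some m => if m = n then (Ideal.Quotient.mk _ Polynomial.X) ^ (n : ℕ) else 0)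

lemma gP_vanish (n : ℕ+) : ∀ a ∈ Ideal.span (relSet k), gP k n a = 0 := by
  have h : Ideal.span (relSet k) ≤ RingHom.ker (gP k n).toRingHom := by
    rw [Ideal.span_le]
    rintro p (⟨i, j, rfl⟩ | ⟨i, rfl⟩)
    · simp only [SetLike.mem_coe, RingHom.mem_ker, AlgHom.toRingHom_eq_coe,
        RingHom.coe_coe, map_mul, map_pow, gP, xP, yP, aeval_X]
      split_ifs
      · exact mkX_sq k n
      all_goals simp
    · simp only [SetLike.mem_coe, RingHom.mem_ker, AlgHom.toRingHom_eq_coe,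
        RingHom.coe_coe, map_mul, map_pow, gP, xP, yP, aeval_X]
      split_ifs with h
      · rw [h]; exact mkX_sq k n
      · exact mul_zero _
  exact fun a ha => h ha

def gR (n : ℕ+) : Rg k →ₐ[k] Qn k n := Ideal.Quotient.liftₐ _ (gP k n) (gP_vanish k n)

@[simp] lemma gR_xR (n m : ℕ+) :
    gR k n (xR k m) =
      if m = n then (Ideal.Quotient.mk _ Polynomial.X) ^ (n : ℕ) else 0 := by
  show gP k n (xP k m) = _
  simp [gP, xP]

@[simp] lemma gR_yR (n : ℕ+) : gR k n (yR k) = Ideal.Quotient.mk _ Polynomial.X := by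
  show gP k n (yP k) = _
  simp [gP, yP]

lemma gR_iotaR (n : ℕ+) (q : Polynomial k) :
    gR k n (iotaR k q) = Ideal.Quotient.mk _ q := by
  have h : (gR k n).comp (iotaR k) =
      Ideal.Quotient.mkₐ k (Ideal.span {(Polynomial.X : Polynomial k) ^ (2 * (n : ℕ))}) := by
    apply Polynomial.algHom_ext
    simp [iotaR]
  exact DFunLike.congr_fun h q

lemma span_x_eq_zero {n : ℕ+} {v : Rg k}
    (hv : v ∈ Submodule.span (Rg k) {xR k n}) (h0 : gR k n v = 0) : v = 0 := by
  obtain ⟨r, rfl⟩ := Submodule.mem_span_singleton.1 hv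
  set p := PhiR k r with hp
  have hv' : r • xR k n = iotaR k p * xR k n := by
    rw [smul_eq_mul]
    have h : r * xR k n = (iotaR k p) * xR k n + (r - iotaR k p) * xR k n := by ring
    rw [h, mul_xR_eq_zero k (sub_mem_spanx k r) n, add_zero]
  have h2 : (Ideal.Quotient.mk
      (Ideal.span {(Polynomial.X : Polynomial k) ^ (2 * (n : ℕ))})
      (p * Polynomial.X ^ (n : ℕ)) : Qn k n) = 0 := by
    have h3 : gR k n (r • xR k n) = 0 := h0
    rw [hv', map_mul, gR_iotaR, gR_xR, if_pos rfl] at h3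
    rw [map_mul, map_pow]
    exact h3
  have hdvd : Polynomial.X ^ (n : ℕ) ∣ p := by
    have h3 : (Polynomial.X : Polynomial k) ^ (2 * (n : ℕ)) ∣ p * Polynomial.X ^ (n : ℕ) :=
      Ideal.mem_span_singleton.1 (Ideal.Quotient.eq_zero_iff_mem.1 h2)
    rw [two_mul, pow_add] at h3
    exact (mul_dvd_mul_iff_right (pow_ne_zero _ Polynomial.X_ne_zero)).1 h3
  obtain ⟨q, hq⟩ := hdvd
  rw [hv', hq, map_mul, map_pow]
  have hX : iotaR k Polynomial.X = yR k := by simp [iotaR]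
  rw [hX]
  calc yR k ^ (n : ℕ) * iotaR k q * xR k n
      = (yR k ^ (n : ℕ) * xR k n) * iotaR k q := by ring
    _ = 0 := by rw [yR_pow_mul_xR, zero_mul]

end Aux

open scoped DirectSum in
/-- In `R = k[x₁, x₂, …, y]/(xᵢxⱼ, yⁱxᵢ)`, the `y`-power torsion submodule
`t(R)` equals the ideal generated by the `xₙ` (`n ≥ 1`), and `t(R)` is the internal direct
sum of the cyclic submodules `R·xₙ`; in particular `t(R) ≅ ⊕ₙ R·xₙ`. -/
theorem stmt_9 (k : Type) [Field k] :
    tR k = Ideal.span (Set.range (xR k)) ∧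
    tR k = (⨆ n : ℕ+, Submodule.span (Rg k) {xR k n}) ∧
    iSupIndep (fun n : ℕ+ => Submodule.span (Rg k) {xR k n}) ∧
    Nonempty ((tR k) ≃ₗ[Rg k] (⨁ n : ℕ+, (Submodule.span (Rg k) {xR k n}))) := by
  have h1 : tR k = Ideal.span (Set.range (xR k)) := by
    apply le_antisymm
    · intro r hr
      rw [tR, Submodule.mem_torsion'_iff] at hr
      obtain ⟨⟨a, m, rfl⟩, ha⟩ := hr
      have ha' : yR k ^ m * r = 0 := by simpa [Submonoid.smul_def, smul_eq_mul] using ha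
      have hX : Polynomial.X ^ m * PhiR k r = 0 := by
        have := congrArg (PhiR k) ha'
        simpa [map_mul, map_pow] using this
      have hr0 : PhiR k r = 0 := by
        rcases mul_eq_zero.1 hX with h | h
        · exact absurd h (pow_ne_zero _ Polynomial.X_ne_zero)
        · exact h
      have h := sub_mem_spanx k r
      rwa [hr0, map_zero, sub_zero] at h
    · rw [Ideal.span_le]
      rintro _ ⟨n, rfl⟩
      show xR k n ∈ tR k
      rw [tR, Submodule.mem_torsion'_iff]
      exact ⟨⟨yR k ^ (n : ℕ), ⟨(n : ℕ), rfl⟩⟩,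
        by simpa [Submonoid.smul_def, smul_eq_mul] using yR_pow_mul_xR k n⟩
  have h2 : tR k = ⨆ n : ℕ+, Submodule.span (Rg k) {xR k n} := by
    rw [h1]; exact Submodule.span_range_eq_iSup
  have h3 : iSupIndep (fun n : ℕ+ => Submodule.span (Rg k) {xR k n}) := by
    intro n
    rw [Submodule.disjoint_def]
    intro v hv hv'
    have hker : (⨆ j, ⨆ (_ : j ≠ n), Submodule.span (Rg k) {xR k j}) ≤
        RingHom.ker (gR k n).toRingHom := by
      refine iSup_le fun j => iSup_le fun hj => ?_
      rw [Submodule.span_singleton_le_iff_mem]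
      show gR k n (xR k j) = 0
      simp [hj]
    exact span_x_eq_zero k hv (hker hv')
  refine ⟨h1, h2, h3, ?_⟩
  have hinj : Function.Injective
      (DFinsupp.lsum ℕ fun n : ℕ+ => (Submodule.span (Rg k) {xR k n}).subtype) :=
    (iSupIndep_iff_dfinsupp_lsum_injective _).1 h3
  have hrange : tR k = LinearMap.range
      (DFinsupp.lsum ℕ fun n : ℕ+ => (Submodule.span (Rg k) {xR k n}).subtype) := by
    rw [h2]; exact Submodule.iSup_eq_range_dfinsupp_lsum _
  exact ⟨(LinearEquiv.ofEq _ _ hrange).trans (LinearEquiv.ofInjective _ hinj).symm⟩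
end

section
/- In the ring R = k[x₁, x₂, …, y]/(x_i x_j, y^i x_i : i, j ≥ 1), for every k ≥ 1 one has y^k x_{k+1} ≠ 0; hence y^k · t(R) ≠ 0 for every k ≥ 1, i.e. no power of y annihilates the y-power torsion submodule t(R) (t(R) is not bounded with respect to the filter of ideals of R containing a power of (y)). -/
open MvPolynomial

set_option maxHeartbeats 1000000
set_option synthInstance.maxHeartbeats 400000

/-! The defining ideal of `R` is a monomial ideal, so a monomial vanishes in `R` exactly when it is
divisible by one of the generating monomials `xᵢxⱼ`, `yⁱxᵢ`. The monomial `yᵐx_{m+1}` is not: it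
has a single `x`-factor, and the only generator with `x_{m+1}` in it is `y^{m+1}x_{m+1}`. Since
`y^{m+1}x_{m+1} = 0`, the element `x_{m+1}` is `y`-torsion, and it survives multiplication
by `yᵐ`. -/

namespace MvPolynomial

theorem monomial_one_mem_ideal_span_monomial_image_iff {σ R : Type*} [CommSemiring R]
    [Nontrivial R] {e : σ →₀ ℕ} {s : Set (σ →₀ ℕ)} :
    monomial e (1 : R) ∈ Ideal.span ((fun s => monomial s (1 : R)) '' s) ↔ ∃ si ∈ s, si ≤ e := by
  classical
  rw [mem_ideal_span_monomial_image, support_monomial, if_neg one_ne_zero]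
  simp

end MvPolynomial

def relExponents : Set (Option ℕ+ →₀ ℕ) :=
  {e | (∃ i j : ℕ+, e = Finsupp.single (some i) 1 + Finsupp.single (some j) 1) ∨
    ∃ i : ℕ+, e = Finsupp.single none (i : ℕ) + Finsupp.single (some i) 1}

theorem relSet_eq_image (k : Type) [Field k] :
    relSet k = (fun e => monomial e (1 : k)) '' relExponents := by
  ext p
  simp only [relSet, relExponents, xP, yP, X, monomial_pow, monomial_mul, mul_one, one_pow,
    Finsupp.smul_single, smul_eq_mul, Set.mem_ofPred_eq, Set.mem_image]
  constructor
  · rintro (⟨i, j, rfl⟩ | ⟨i, rfl⟩)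
    exacts [⟨_, Or.inl ⟨i, j, rfl⟩, rfl⟩, ⟨_, Or.inr ⟨i, rfl⟩, rfl⟩]
  · rintro ⟨e, ⟨i, j, rfl⟩ | ⟨i, rfl⟩, rfl⟩
    exacts [Or.inl ⟨i, j, rfl⟩, Or.inr ⟨i, rfl⟩]

theorem eq_of_le_single_add_single {e : Option ℕ+ →₀ ℕ} {n : ℕ} {i j : ℕ+}
    (hle : e ≤ Finsupp.single none n + Finsupp.single (some j) 1) (hi : 0 < e (some i)) :
    i = j := by
  by_contra h
  simpa [Finsupp.single_apply, Ne.symm h] using hi.trans_le (hle (some i))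

theorem not_le_of_mem_relExponents (m : ℕ+) :
    ∀ e ∈ relExponents, ¬ e ≤ Finsupp.single none (m : ℕ) + Finsupp.single (some (m + 1)) 1 := by
  rintro e (⟨i, j, rfl⟩ | ⟨i, rfl⟩) hle
  · obtain rfl : i = m + 1 := eq_of_le_single_add_single hle (by simp)
    obtain rfl : j = m + 1 := eq_of_le_single_add_single hle (by simp)
    simpa using hle (some (m + 1))
  · obtain rfl : i = m + 1 := eq_of_le_single_add_single hle (by simp)
    simpa using hle none

theorem yR_pow_mul_xR_s11 (k : Type) [Field k] (n : ℕ) (i : ℕ+) :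
    yR k ^ n * xR k i =
      Ideal.Quotient.mk _
        (monomial (Finsupp.single none n + Finsupp.single (some i) 1) (1 : k)) := by
  rw [yR, xR, yP, xP, ← map_pow, ← map_mul, X_pow_eq_monomial, X, monomial_mul, one_mul]

theorem yR_pow_mul_xR_succ_ne_zero (k : Type) [Field k] (m : ℕ+) :
    yR k ^ (m : ℕ) * xR k (m + 1) ≠ 0 := by
  rw [yR_pow_mul_xR_s11, Ne, Ideal.Quotient.eq_zero_iff_mem, relSet_eq_image,
    monomial_one_mem_ideal_span_monomial_image_iff]
  rintro ⟨e, he, hle⟩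
  exact not_le_of_mem_relExponents m e he hle

theorem xR_mem_tR (k : Type) [Field k] (i : ℕ+) : xR k i ∈ tR k := by
  refine ⟨⟨yR k ^ (i : ℕ), i, rfl⟩, ?_⟩
  change yR k ^ (i : ℕ) * xR k i = 0
  rw [yR, xR, ← map_pow, ← map_mul, Ideal.Quotient.eq_zero_iff_mem]
  exact Ideal.subset_span (Or.inr ⟨i, rfl⟩)

/-- In `R = k[x₁, x₂, …, y]/(xᵢxⱼ, yⁱxᵢ)`, for every `m ≥ 1` one has
`yᵐ x_{m+1} ≠ 0`; hence `yᵐ · t(R) ≠ 0` for every `m ≥ 1`, i.e. no power of `y` annihilates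
the `y`-power torsion submodule `t(R)`. -/
theorem stmt_11 (k : Type) [Field k] :
    (∀ m : ℕ+, yR k ^ (m : ℕ) * xR k (m + 1) ≠ 0) ∧
    (∀ m : ℕ+, ∃ r ∈ tR k, yR k ^ (m : ℕ) * r ≠ 0) :=
  ⟨yR_pow_mul_xR_succ_ne_zero k,
    fun m => ⟨xR k (m + 1), xR_mem_tR k (m + 1), yR_pow_mul_xR_succ_ne_zero k m⟩⟩
end

section
/- In the ring R = k[x₁, x₂, …, y]/(x_i x_j, y^i x_i : i, j ≥ 1), every R-submodule N of the y-power torsion submodule t(R) satisfying y·N = N is zero; equivalently, t(R) has no nonzero submodule divisible with respect to the filter of ideals of R containing a power of (y). -/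
open MvPolynomial

set_option maxHeartbeats 1000000
set_option synthInstance.maxHeartbeats 400000

/-!
Every relation is a monomial, so membership in the ideal of relations is decided monomial by
monomial. An element of `R` lying in `(yⁿ)` for every `n` lifts, for each `n`, to a polynomial
congruent to a multiple of `yⁿ`; taking `n` larger than the `y`-degree of a given monomial shows
that the monomial is itself divisible by a relation. Hence `⋂ₙ (y)ⁿ = 0` in `R`, while a
submodule with `(y)·N = N` lies in every `(y)ⁿ`.
-/

theorem Submodule.pow_smul_eq_self_of_smul_eq_self {R M : Type*} [CommSemiring R]
    [AddCommMonoid M] [Module R M] {I : Ideal R} {N : Submodule R M} (h : I • N = N) (n : ℕ) :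
    I ^ n • N = N := by
  induction n with
  | zero => rw [pow_zero, Ideal.one_eq_top, Submodule.top_smul]
  | succ n ih => rw [pow_succ, Submodule.mul_smul, h, ih]

theorem Ideal.le_pow_of_smul_eq_self {R : Type*} [CommSemiring R] {I N : Ideal R}
    (h : I • N = N) (n : ℕ) : N ≤ I ^ n :=
  calc N = I ^ n • N := (Submodule.pow_smul_eq_self_of_smul_eq_self h n).symm
    _ ≤ I ^ n := Ideal.mul_le_left

def relExps : Set (Option ℕ+ →₀ ℕ) :=
  {e | (∃ i j : ℕ+, e = Finsupp.single (some i) 1 + Finsupp.single (some j) 1) ∨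
    ∃ i : ℕ+, e = Finsupp.single none (i : ℕ) + Finsupp.single (some i) 1}

theorem xP_mul_xP (k : Type) [Field k] (i j : ℕ+) :
    xP k i * xP k j = monomial (Finsupp.single (some i) 1 + Finsupp.single (some j) 1) 1 := by
  rw [xP, xP, X, X, monomial_mul, one_mul]

theorem yP_pow_mul_xP (k : Type) [Field k] (i : ℕ+) :
    yP k ^ (i : ℕ) * xP k i =
      monomial (Finsupp.single none (i : ℕ) + Finsupp.single (some i) 1) 1 := by
  rw [yP, xP, X_pow_eq_monomial, X, monomial_mul, one_mul]

theorem relSet_eq_image_relExps (k : Type) [Field k] :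
    relSet k = (fun e => monomial e (1 : k)) '' relExps := by
  ext p
  simp only [relSet, relExps, Set.mem_ofPred_eq, Set.mem_image]
  constructor
  · rintro (⟨i, j, rfl⟩ | ⟨i, rfl⟩)
    · exact ⟨_, Or.inl ⟨i, j, rfl⟩, (xP_mul_xP k i j).symm⟩
    · exact ⟨_, Or.inr ⟨i, rfl⟩, (yP_pow_mul_xP k i).symm⟩
  · rintro ⟨e, ⟨i, j, rfl⟩ | ⟨i, rfl⟩, rfl⟩
    · exact Or.inl ⟨i, j, (xP_mul_xP k i j).symm⟩
    · exact Or.inr ⟨i, (yP_pow_mul_xP k i).symm⟩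

theorem mem_span_relSet_iff {k : Type} [Field k] {p : PolyR k} :
    p ∈ Ideal.span (relSet k) ↔ ∀ d ∈ p.support, ∃ e ∈ relExps, e ≤ d := by
  rw [relSet_eq_image_relExps, mem_ideal_span_monomial_image]

theorem coeff_mul_yP_pow_of_lt {k : Type} [Field k] (q : PolyR k) {d : Option ℕ+ →₀ ℕ}
    {n : ℕ} (hd : d none < n) : coeff d (q * yP k ^ n) = 0 := by
  rw [yP, X_pow_eq_monomial, coeff_mul_monomial', if_neg]
  rw [Finsupp.single_le_iff]
  exact hd.not_ge

theorem iInf_span_yR_pow_eq_bot (k : Type) [Field k] :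
    ⨅ n : ℕ, Ideal.span {yR k} ^ n = ⊥ := by
  refine eq_bot_iff.mpr fun r hr => ?_
  obtain ⟨p, rfl⟩ := Ideal.Quotient.mk_surjective r
  rw [Submodule.mem_bot, Ideal.Quotient.eq_zero_iff_mem, mem_span_relSet_iff]
  intro d hd
  have hdiv : Ideal.Quotient.mk _ p ∈ Ideal.span {yR k ^ (d none + 1)} := by
    rw [← Ideal.span_singleton_pow]
    exact Submodule.mem_iInf _ |>.mp hr _
  obtain ⟨s, hs⟩ := Ideal.mem_span_singleton'.mp hdiv
  obtain ⟨q, rfl⟩ := Ideal.Quotient.mk_surjective s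
  rw [yR, ← map_pow, ← map_mul, Ideal.Quotient.mk_eq_mk_iff_sub_mem, mem_span_relSet_iff] at hs
  apply hs
  rw [mem_support_iff, coeff_sub, coeff_mul_yP_pow_of_lt q (Nat.lt_succ_self _), zero_sub,
    neg_ne_zero, ← mem_support_iff]
  exact hd

theorem stmt_12_general (k : Type) [Field k] (N : Submodule (Rg k) (Rg k))
    (hdiv : Ideal.span {yR k} • N = N) : N = ⊥ :=
  eq_bot_iff.mpr <| (le_iInf (Ideal.le_pow_of_smul_eq_self hdiv)).trans
    (iInf_span_yR_pow_eq_bot k).le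

/-- In `R = k[x₁, x₂, …, y]/(xᵢxⱼ, yⁱxᵢ)`, every submodule `N ⊆ t(R)` with
`y·N = N` is zero; i.e. `t(R)` has no nonzero divisible submodule with respect to the filter
of ideals containing a power of `(y)`. -/
theorem stmt_12 (k : Type) [Field k] (N : Submodule (Rg k) (Rg k))
    (hN : N ≤ tR k) (hdiv : Ideal.span {yR k} • N = N) : N = ⊥ :=
  stmt_12_general k N hdiv
end

section
/- Let R be a commutative noetherian ring, let W₀ be the set of minimal prime ideals of R, and let S = R \ ⋃_{p ∈ W₀} p. Then the localization S⁻¹R is an artinian ring, and the canonical ring homomorphism S⁻¹R → ∏_{p ∈ W₀} R_p (induced by the localization maps R → R_p) is an isomorphism. -/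
noncomputable section

variable (R : Type) [CommRing R]

instance minimalPrimes.isPrime' (p : minimalPrimes R) : Ideal.IsPrime (p : Ideal R) :=
  p.2.1.1

/-- The multiplicative set `S = R \ ⋃_{p minimal prime} p`. -/
def minComplement : Submonoid R where
  carrier := {r : R | ∀ p ∈ minimalPrimes R, r ∉ p}
  one_mem' := by
    intro p hp h1
    exact hp.1.1.ne_top ((Ideal.eq_top_iff_one p).mpr h1)
  mul_mem' := by
    intro a b ha hb p hp hab
    exact (hp.1.1.mem_or_mem hab).elim (ha p hp) (hb p hp)

/-- The canonical ring homomorphism `S⁻¹R → ∏_{p minimal} R_p` induced by the localization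
maps `R → R_p`. -/
def canonicalMap :
    Localization (minComplement R) →+*
      ((p : minimalPrimes R) → Localization.AtPrime (p : Ideal R)) :=
  IsLocalization.lift (M := minComplement R)
    (g := Pi.ringHom fun p : minimalPrimes R => algebraMap R (Localization.AtPrime (p : Ideal R)))
    (by
      intro s
      choose u hu using fun p : minimalPrimes R =>
        (IsLocalization.map_units (M := (p : Ideal R).primeCompl)
          (Localization.AtPrime (p : Ideal R)) ⟨(s : R), s.2 p.1 p.2⟩).exists_right_inv
      exact isUnit_iff_exists_inv.mpr ⟨u, funext hu⟩)

/-! Every element of a minimal prime `q` becomes nilpotent in `R_q`, since `R_q` has a single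
prime ideal. Prime avoidance gives `t` outside `p` but inside every other minimal prime, and a
power `e p` of `t` then survives in `R_p` while vanishing in every other `R_q`. These elements
glue a family `(r_p / s_p)` of fractions into the single fraction
`(∑ e p * r_p) / (∑ e p * s_p)`, whose denominator lies in `S`; likewise they glue the witnesses
of `x = y` in each `R_p`. Hence `∏ R_p` is itself a localization of `R` at `S`, so the canonical
map is an isomorphism, and `S⁻¹R` is artinian because each `R_p` is noetherian of dimension zero. -/

variable {R}

theorem isNilpotent_algebraMap_of_mem_minimalPrimes {q : Ideal R} [q.IsPrime]
    (hq : q ∈ minimalPrimes R) {t : R} (ht : t ∈ q) :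
    IsNilpotent (algebraMap R (Localization.AtPrime q) t) := by
  have := Ring.KrullDimLE.of_isLocalization q hq (Localization.AtPrime q)
  rw [← mem_nilradical, Ring.KrullDimLE.nilradical_eq_maximalIdeal]
  exact (IsLocalization.AtPrime.to_map_mem_maximal_iff _ q t).mpr ht

theorem exists_notMem_mem_of_ne_minimalPrimes [Finite (minimalPrimes R)] {p : Ideal R}
    (hp : p ∈ minimalPrimes R) : ∃ t ∉ p, ∀ q ∈ minimalPrimes R, q ≠ p → t ∈ q := by
  classical
  have hfin := Set.toFinite (minimalPrimes R)
  have hnle : ¬ (hfin.toFinset.erase p).inf id ≤ p := fun hle ↦ by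
    obtain ⟨q, hq, hqp⟩ := hp.1.1.inf_le'.mp hle
    obtain ⟨hne, hq⟩ := Finset.mem_erase.mp hq
    exact hne (le_antisymm hqp (hp.2 (hfin.mem_toFinset.mp hq).1 hqp))
  obtain ⟨t, ht, htp⟩ := SetLike.not_le_iff_exists.mp hnle
  exact ⟨t, htp, fun q hq hqp ↦
    Finset.inf_le (f := id) (Finset.mem_erase.mpr ⟨hqp, hfin.mem_toFinset.mpr hq⟩) ht⟩

theorem exists_notMem_algebraMap_localization_eq_zero [Finite (minimalPrimes R)]
    (p : minimalPrimes R) :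
    ∃ e ∉ (p : Ideal R), ∀ q : minimalPrimes R, q ≠ p →
      algebraMap R (Localization.AtPrime (q : Ideal R)) e = 0 := by
  classical
  have := Fintype.ofFinite (minimalPrimes R)
  obtain ⟨t, htp, htq⟩ := exists_notMem_mem_of_ne_minimalPrimes p.2
  choose n hn using fun q : {q : minimalPrimes R // q ≠ p} ↦
    isNilpotent_algebraMap_of_mem_minimalPrimes q.1.2 (htq q q.1.2 (Subtype.coe_ne_coe.mpr q.2))
  refine ⟨t ^ Finset.univ.sup n, fun h ↦ htp (p.2.1.1.mem_of_pow_mem _ h), fun q hq ↦ ?_⟩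
  rw [map_pow]
  exact pow_eq_zero_of_le (Finset.le_sup (Finset.mem_univ ⟨q, hq⟩)) (hn ⟨q, hq⟩)

section Glue

variable [Fintype (minimalPrimes R)] {e : minimalPrimes R → R}

theorem algebraMap_sum_mul_eq
    (he : ∀ p q : minimalPrimes R, q ≠ p →
      algebraMap R (Localization.AtPrime (q : Ideal R)) (e p) = 0)
    (c : minimalPrimes R → R) (p : minimalPrimes R) :
    algebraMap R (Localization.AtPrime (p : Ideal R)) (∑ q, e q * c q) =
      algebraMap R _ (e p * c p) := by
  rw [map_sum, Finset.sum_eq_single p (fun q _ hqp ↦ by rw [map_mul, he q p hqp.symm, zero_mul])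
    (absurd (Finset.mem_univ p))]

theorem sum_mul_mem_minComplement (he' : ∀ p : minimalPrimes R, e p ∉ (p : Ideal R))
    (he : ∀ p q : minimalPrimes R, q ≠ p →
      algebraMap R (Localization.AtPrime (q : Ideal R)) (e p) = 0)
    {c : minimalPrimes R → R} (hc : ∀ p : minimalPrimes R, c p ∉ (p : Ideal R)) :
    ∑ q, e q * c q ∈ minComplement R := by
  suffices ∀ p : minimalPrimes R, ∑ q, e q * c q ∉ (p : Ideal R) from fun p hp ↦ this ⟨p, hp⟩
  intro p hmem
  rw [← IsLocalization.AtPrime.to_map_mem_maximal_iff (Localization.AtPrime (p : Ideal R))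
      (p : Ideal R), algebraMap_sum_mul_eq he c p,
    IsLocalization.AtPrime.to_map_mem_maximal_iff _ (p : Ideal R)] at hmem
  exact p.2.1.1.mul_notMem (he' p) (hc p) hmem

end Glue

theorem isLocalization_minComplement_pi [Finite (minimalPrimes R)] :
    IsLocalization (minComplement R)
      (Π p : minimalPrimes R, Localization.AtPrime (p : Ideal R)) := by
  have := Fintype.ofFinite (minimalPrimes R)
  choose e he' he using exists_notMem_algebraMap_localization_eq_zero (R := R)
  refine ⟨fun s ↦ ?_, fun z ↦ ?_, fun {x y} hxy ↦ ?_⟩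
  · exact Pi.isUnit_iff.mpr fun p ↦
      IsLocalization.map_units (M := (p : Ideal R).primeCompl) _ ⟨s, s.2 p p.2⟩
  · choose x hx using fun p : minimalPrimes R ↦
      IsLocalization.surj (M := (p : Ideal R).primeCompl) (z p)
    refine ⟨⟨∑ q, e q * (x q).1, ⟨_, sum_mul_mem_minComplement he' he fun p ↦ (x p).2.2⟩⟩, ?_⟩
    funext p
    simp only [Pi.mul_apply, Pi.algebraMap_apply, algebraMap_sum_mul_eq he, map_mul, ← hx p]
    ring
  · choose c hc using fun p : minimalPrimes R ↦
      IsLocalization.exists_of_eq (M := (p : Ideal R).primeCompl) (congrFun hxy p)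
    refine ⟨⟨_, sum_mul_mem_minComplement he' he fun p ↦ (c p).2⟩, ?_⟩
    simp only [Finset.sum_mul, mul_assoc, hc]

/-- Let `R` be a commutative noetherian ring, `W₀` the set of its minimal
primes and `S = R \ ⋃_{p ∈ W₀} p`. Then `S⁻¹R` is an artinian ring and the canonical ring
homomorphism `S⁻¹R → ∏_{p ∈ W₀} R_p` induced by the localization maps is an isomorphism. -/
theorem stmt_15 (R : Type) [CommRing R] [IsNoetherianRing R] :
    IsArtinianRing (Localization (minComplement R)) ∧
    Function.Bijective (canonicalMap R) := by
  have := (minimalPrimes.finite_of_isNoetherianRing R).to_subtype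
  have := isLocalization_minComplement_pi (R := R)
  have hbij : Function.Bijective (canonicalMap R) :=
    IsLocalization.bijective (minComplement R) _ (RingHom.ext (IsLocalization.lift_eq _))
  have (p : minimalPrimes R) : IsArtinianRing (Localization.AtPrime (p : Ideal R)) :=
    isArtinianRing_iff_krullDimLE_zero.mpr (.of_isLocalization _ p.2 _)
  exact ⟨(RingEquiv.ofBijective _ hbij).symm.isArtinianRing, hbij⟩

end
end
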